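/- arXiv:0810.0831 — 3 statements merged into one kernel-verified Lean document; each statement's English description precedes it below -/
import Mathlib

section
/- Let E be a 𝕂-algebra with a family of submultiplicative seminorms P (∀p ∈ P, p(uv) ≤ p(u)p(v)). Let A be a solid subring of 𝕂^Λ and I_A a solid ideal of A. Then M = {(u_λ) ∈ E^Λ : ∀p ∈ P, (p(u_λ))_λ ∈ |A|} is a 𝕂-subalgebra of E^Λ, and N = {(u_λ) ∈ E^Λ : ∀p ∈ P, (p(u_λ))_λ ∈ |I_A|} is a two-sided ideal of M. -/
/-!
Each seminorm `q` of the family turns a net `u ∈ E^Λ` into the nonnegative real net `q ∘ u`, and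
for a solid set `B` such a net lies in `|B|` exactly when it lies in `B`. Subadditivity and
submultiplicativity dominate `q ∘ (u + v)` and `q ∘ (u * v)` by sums and products of such nets,
so solidity transfers the closure properties of `A` and `I_A` to `M` and `N`; constant nets lie
in `A` because they are dominated by natural numbers.
-/

open LatticeOrderedAddCommGroup

namespace LatticeOrderedAddCommGroup.IsSolid

theorem mem_of_nonneg_of_le {α : Type*} [Lattice α] [AddCommGroup α] [AddLeftMono α]
    {s : Set α} (hs : IsSolid s) {x y : α} (hx : x ∈ s) (hy : 0 ≤ y) (hyx : y ≤ x) : y ∈ s :=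
  hs hx <| by rw [abs_of_nonneg hy]; exact hyx.trans (le_abs_self x)

theorem exists_forall_eq_abs_iff {Λ β : Type*} [AddCommGroup β] [LinearOrder β]
    [IsOrderedAddMonoid β] {s : Set (Λ → β)} (hs : IsSolid s) {f : Λ → β} (hf : 0 ≤ f) :
    (∃ r ∈ s, ∀ l, f l = |r l|) ↔ f ∈ s :=
  ⟨fun ⟨r, hr, hfr⟩ => hs hr fun l => by rw [Pi.abs_apply, Pi.abs_apply, hfr l, abs_abs],
    fun hf' => ⟨f, hf', fun l => (abs_of_nonneg (hf l)).symm⟩⟩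

end LatticeOrderedAddCommGroup.IsSolid

theorem Subring.const_mem_of_isSolid {Λ R : Type*} [Ring R] [LinearOrder R]
    [IsStrictOrderedRing R] [Archimedean R] (A : Subring (Λ → R)) (hA : IsSolid (A : Set (Λ → R)))
    (c : R) : Function.const Λ c ∈ A := by
  obtain ⟨n, hn⟩ := exists_nat_ge |c|
  refine hA (natCast_mem A n) fun l => ?_
  simpa [Pi.natCast_apply] using hn

namespace Seminorm

section AddGroup

variable {𝕜 E Λ : Type*} [SeminormedRing 𝕜] [AddGroup E] [SMul 𝕜 E] (q : Seminorm 𝕜 E)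

theorem coe_comp_zero : q ∘ (0 : Λ → E) = 0 :=
  funext fun _ => map_zero q

theorem coe_comp_neg (u : Λ → E) : q ∘ (-u) = q ∘ u :=
  funext fun l => map_neg_eq_map q (u l)

theorem coe_comp_smul (c : 𝕜) (u : Λ → E) : q ∘ (c • u) = Function.const Λ ‖c‖ * q ∘ u :=
  funext fun l => map_smul_eq_mul q c (u l)

theorem coe_comp_add_mem {s : Set (Λ → ℝ)} (hs : IsSolid s) (hadd : ∀ f ∈ s, ∀ g ∈ s, f + g ∈ s)
    {u v : Λ → E} (hu : q ∘ u ∈ s) (hv : q ∘ v ∈ s) : q ∘ (u + v) ∈ s :=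
  hs.mem_of_nonneg_of_le (hadd _ hu _ hv) (fun _ => apply_nonneg q _)
    fun l => map_add_le_add q (u l) (v l)

end AddGroup

theorem coe_comp_mul_mem {𝕜 E Λ : Type*} [SeminormedRing 𝕜] [NonUnitalNonAssocRing E] [SMul 𝕜 E]
    (q : Seminorm 𝕜 E) (hq : ∀ x y, q (x * y) ≤ q x * q y) {s t : Set (Λ → ℝ)}
    (hs : IsSolid s) (hmul : ∀ a ∈ t, ∀ f ∈ s, a * f ∈ s) {u v : Λ → E} (hu : q ∘ u ∈ t)
    (hv : q ∘ v ∈ s) : q ∘ (u * v) ∈ s ∧ q ∘ (v * u) ∈ s := by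
  have hprod := hmul _ hu _ hv
  refine ⟨hs.mem_of_nonneg_of_le hprod (fun _ => apply_nonneg q _) fun l => hq (u l) (v l),
    hs.mem_of_nonneg_of_le hprod (fun _ => apply_nonneg q _) fun l => ?_⟩
  exact (hq (v l) (u l)).trans_eq (mul_comm _ _)

end Seminorm

theorem moderate_subalgebra_negligible_ideal_general
    (Λ : Type*) (𝕜 : Type*) [RCLike 𝕜]
    (E : Type*) [Ring E] [Algebra 𝕜 E]
    (ι : Type*) (p : ι → E → ℝ)
    (hpadd : ∀ i u v, p i (u + v) ≤ p i u + p i v)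
    (hpsmul : ∀ i (c : 𝕜) u, p i (c • u) = ‖c‖ * p i u)
    (hpmul : ∀ i u v, p i (u * v) ≤ p i u * p i v)
    (A : Subring (Λ → ℝ))
    (hsolid : ∀ s r : Λ → ℝ, r ∈ A → (∀ l, |s l| ≤ |r l|) → s ∈ A)
    (I : Set (Λ → ℝ)) (hIA : I ⊆ (A : Set (Λ → ℝ)))
    (hI0 : (0 : Λ → ℝ) ∈ I)
    (hIadd : ∀ a ∈ I, ∀ a' ∈ I, a + a' ∈ I)
    (hImul : ∀ a ∈ A, ∀ x ∈ I, a * x ∈ I)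
    (hsolidI : ∀ s r : Λ → ℝ, r ∈ I → (∀ l, |s l| ≤ |r l|) → s ∈ I) :
    let M : Set (Λ → E) := {u | ∀ i, ∃ r ∈ A, ∀ l, p i (u l) = |r l|}
    let N : Set (Λ → E) := {u | ∀ i, ∃ r ∈ I, ∀ l, p i (u l) = |r l|}
    ((0 : Λ → E) ∈ M ∧ (1 : Λ → E) ∈ M ∧
     (∀ u ∈ M, ∀ v ∈ M, u + v ∈ M) ∧ (∀ u ∈ M, -u ∈ M) ∧
     (∀ (c : 𝕜), ∀ u ∈ M, c • u ∈ M) ∧ (∀ u ∈ M, ∀ v ∈ M, u * v ∈ M)) ∧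
    (N ⊆ M ∧ (0 : Λ → E) ∈ N ∧
     (∀ u ∈ N, ∀ v ∈ N, u + v ∈ N) ∧ (∀ u ∈ N, -u ∈ N) ∧
     (∀ u ∈ M, ∀ v ∈ N, u * v ∈ N ∧ v * u ∈ N)) := by
  intro M N
  let q (i : ι) : Seminorm 𝕜 E := Seminorm.of (p i) (hpadd i) (hpsmul i)
  have hA : IsSolid (A : Set (Λ → ℝ)) := fun r hr s hs => hsolid s r hr hs
  have hI : IsSolid I := fun r hr s hs => hsolidI s r hr hs
  have hM (u : Λ → E) : u ∈ M ↔ ∀ i, q i ∘ u ∈ A :=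
    forall_congr' fun i => hA.exists_forall_eq_abs_iff fun _ => apply_nonneg (q i) _
  have hN (u : Λ → E) : u ∈ N ↔ ∀ i, q i ∘ u ∈ I :=
    forall_congr' fun i => hI.exists_forall_eq_abs_iff fun _ => apply_nonneg (q i) _
  have hAadd : ∀ f ∈ A, ∀ g ∈ A, f + g ∈ A := fun _ hf _ hg => add_mem hf hg
  have hAmul : ∀ f ∈ A, ∀ g ∈ A, f * g ∈ A := fun _ hf _ hg => mul_mem hf hg
  simp only [Set.subset_def, hM, hN]
  refine ⟨⟨fun i => ?_, fun i => ?_, fun u hu v hv i => ?_, fun u hu i => ?_, fun c u hu i => ?_,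
    fun u hu v hv i => ?_⟩, fun u hu i => hIA (hu i), fun i => ?_, fun u hu v hv i => ?_,
    fun u hu i => ?_, fun u hu v hv => ⟨fun i => ?_, fun i => ?_⟩⟩
  · exact (q i).coe_comp_zero ▸ zero_mem A
  · exact A.const_mem_of_isSolid hA (p i 1)
  · exact (q i).coe_comp_add_mem hA hAadd (hu i) (hv i)
  · exact (q i).coe_comp_neg u ▸ hu i
  · exact (q i).coe_comp_smul c u ▸ mul_mem (A.const_mem_of_isSolid hA _) (hu i)
  · exact ((q i).coe_comp_mul_mem (hpmul i) hA hAmul (hu i) (hv i)).1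
  · exact (q i).coe_comp_zero ▸ hI0
  · exact (q i).coe_comp_add_mem hI hIadd (hu i) (hv i)
  · exact (q i).coe_comp_neg u ▸ hu i
  · exact ((q i).coe_comp_mul_mem (hpmul i) hI hImul (hu i) (hv i)).1
  · exact ((q i).coe_comp_mul_mem (hpmul i) hI hImul (hu i) (hv i)).2

/-- For a `𝕜`-algebra `E` with a family of submultiplicative seminorms
`P = (p i)`, a solid subring `A` of the real nets over `Λ` and a solid ideal `I_A` of `A`,
the set `M` of moderate nets is a `𝕜`-subalgebra of `E^Λ` and the set `N` of negligible
nets is a (two-sided) ideal of `M`.  Membership of `(p(u_λ))_λ` in `|B| = {(|r_λ|)_λ : r ∈ B}`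
is expressed by `∃ r ∈ B, ∀ l, p (u l) = |r l|`. -/
theorem moderate_subalgebra_negligible_ideal
    (Λ : Type*) (𝕜 : Type*) [RCLike 𝕜]
    (E : Type*) [Ring E] [Algebra 𝕜 E]
    (ι : Type*) (p : ι → E → ℝ)
    (hp0 : ∀ i u, 0 ≤ p i u)
    (hpadd : ∀ i u v, p i (u + v) ≤ p i u + p i v)
    (hpsmul : ∀ i (c : 𝕜) u, p i (c • u) = ‖c‖ * p i u)
    (hpmul : ∀ i u v, p i (u * v) ≤ p i u * p i v)
    (A : Subring (Λ → ℝ))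
    (hsolid : ∀ s r : Λ → ℝ, r ∈ A → (∀ l, |s l| ≤ |r l|) → s ∈ A)
    (I : Set (Λ → ℝ)) (hIA : I ⊆ (A : Set (Λ → ℝ)))
    (hI0 : (0 : Λ → ℝ) ∈ I)
    (hIadd : ∀ a ∈ I, ∀ a' ∈ I, a + a' ∈ I)
    (hImul : ∀ a ∈ A, ∀ x ∈ I, a * x ∈ I)
    (hsolidI : ∀ s r : Λ → ℝ, r ∈ I → (∀ l, |s l| ≤ |r l|) → s ∈ I) :
    let M : Set (Λ → E) := {u | ∀ i, ∃ r ∈ A, ∀ l, p i (u l) = |r l|}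
    let N : Set (Λ → E) := {u | ∀ i, ∃ r ∈ I, ∀ l, p i (u l) = |r l|}
    ((0 : Λ → E) ∈ M ∧ (1 : Λ → E) ∈ M ∧
     (∀ u ∈ M, ∀ v ∈ M, u + v ∈ M) ∧ (∀ u ∈ M, -u ∈ M) ∧
     (∀ (c : 𝕜), ∀ u ∈ M, c • u ∈ M) ∧ (∀ u ∈ M, ∀ v ∈ M, u * v ∈ M)) ∧
    (N ⊆ M ∧ (0 : Λ → E) ∈ N ∧
     (∀ u ∈ N, ∀ v ∈ N, u + v ∈ N) ∧ (∀ u ∈ N, -u ∈ N) ∧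
     (∀ u ∈ M, ∀ v ∈ N, u * v ∈ N ∧ v * u ∈ N)) :=
  moderate_subalgebra_negligible_ideal_general Λ 𝕜 E ι p hpadd hpsmul hpmul A hsolid I hIA hI0 hIadd
    hImul hsolidI
end

section
/- (Austrian lemma / 0-order estimate, sequence version on ℝ^d.) Let 𝓑 ⊆ (ℝ₊*)^ℕ be closed under addition, multiplication and pointwise inverse, containing positive constants and some sequence tending to 0 (with ℕ ordered so that λ ⪯ λ₀ means λ ≥ λ₀, i.e., 'eventually' is as n → ∞). Define a_n ≪ b_n iff a_n ≤ b_n for all large n, A_𝓑 = {(a_n) : ∃(b_n) ∈ 𝓑, |a_n| ≪ b_n}, I_𝓑 = {(a_n) : ∀(b_n) ∈ 𝓑, |a_n| ≪ b_n}. Let (u_n) be a sequence of C^∞ functions on ℝ^d such that for every compact K and every multi-index α, the sequence (sup_{x∈K}|∂^α u_n(x)|)_n belongs to A_𝓑. If for every compact K the sequence (sup_{x∈K}|u_n(x)|)_n belongs to I_𝓑, then for every compact K, every multi-index α, the sequence (sup_{x∈K}|∂^α u_n(x)|)_n belongs to I_𝓑. -/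
/-- Partial derivative of `u : ℝ^d → ℝ` in the `i`-th coordinate direction. -/
noncomputable def pderivDir {d : ℕ} (i : Fin d) (u : (Fin d → ℝ) → ℝ) :
    (Fin d → ℝ) → ℝ :=
  fun x => fderiv ℝ u x (Pi.single i 1 : Fin d → ℝ)

/-- Iterated partial derivative `∂^α u` for a multi-index `α` (a list of directions). -/
noncomputable def pderivMulti {d : ℕ} (α : List (Fin d)) (u : (Fin d → ℝ) → ℝ) :
    (Fin d → ℝ) → ℝ :=
  α.foldr pderivDir u

lemma pderivDir_smooth {d : ℕ} (i : Fin d) {u : (Fin d → ℝ) → ℝ} (hu : ContDiff ℝ (⊤ : ℕ∞) u) :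
    ContDiff ℝ (⊤ : ℕ∞) (pderivDir i u) :=
  (hu.fderiv_right (by simp)).clm_apply contDiff_const

lemma pderivMulti_smooth {d : ℕ} (α : List (Fin d)) {u : (Fin d → ℝ) → ℝ}
    (hu : ContDiff ℝ (⊤ : ℕ∞) u) : ContDiff ℝ (⊤ : ℕ∞) (pderivMulti α u) := by
  induction α with
  | nil => exact hu
  | cons i α ih => exact pderivDir_smooth i ih

lemma hasDerivAt_line {d : ℕ} (i : Fin d) {w : (Fin d → ℝ) → ℝ} (hw : ContDiff ℝ (⊤ : ℕ∞) w)
    (x : Fin d → ℝ) (t : ℝ) :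
    HasDerivAt (fun s : ℝ => w (x + s • (Pi.single i 1 : Fin d → ℝ)))
      (pderivDir i w (x + t • (Pi.single i 1 : Fin d → ℝ))) t := by
  have hline : HasDerivAt (fun s : ℝ => x + s • (Pi.single i 1 : Fin d → ℝ))
      (Pi.single i 1 : Fin d → ℝ) t := by
    have := ((hasDerivAt_id t).smul_const (Pi.single i 1 : Fin d → ℝ)).const_add x
    simpa using this
  have hF := (hw.differentiable (by simp) (x + t • (Pi.single i 1 : Fin d → ℝ))).hasFDerivAt
  exact hF.comp_hasDerivAt t hline

lemma key_estimate {d : ℕ} (i : Fin d) {v : (Fin d → ℝ) → ℝ} (hv : ContDiff ℝ (⊤ : ℕ∞) v)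
    (x : Fin d → ℝ) {h B0 B2 : ℝ} (hh : 0 < h)
    (hB0 : ∀ t ∈ Set.Icc (0:ℝ) h, |v (x + t • (Pi.single i 1 : Fin d → ℝ))| ≤ B0)
    (hB2 : ∀ t ∈ Set.Icc (0:ℝ) h,
      |pderivDir i (pderivDir i v) (x + t • (Pi.single i 1 : Fin d → ℝ))| ≤ B2) :
    |pderivDir i v x| ≤ 2 * B0 / h + h * B2 := by
  set e : Fin d → ℝ := Pi.single i 1 with he
  set g : ℝ → ℝ := fun t => v (x + t • e) with hg
  set g1 : ℝ → ℝ := fun t => pderivDir i v (x + t • e) with hg1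
  set g2 : ℝ → ℝ := fun t => pderivDir i (pderivDir i v) (x + t • e) with hg2
  have hdg : ∀ t : ℝ, HasDerivAt g (g1 t) t := fun t => hasDerivAt_line i hv x t
  have hdg1 : ∀ t : ℝ, HasDerivAt g1 (g2 t) t := fun t =>
    hasDerivAt_line i (pderivDir_smooth i hv) x t
  obtain ⟨ξ, hξ, hslope⟩ := exists_hasDerivAt_eq_slope g g1 hh
    (fun t _ => (hdg t).continuousAt.continuousWithinAt) (fun t ht => hdg t)
  have hξIcc : ξ ∈ Set.Icc (0:ℝ) h := ⟨hξ.1.le, hξ.2.le⟩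
  have h0Icc : (0:ℝ) ∈ Set.Icc (0:ℝ) h := ⟨le_refl _, hh.le⟩
  have hmvt : ‖g1 0 - g1 ξ‖ ≤ B2 * ‖(0:ℝ) - ξ‖ :=
    (convex_Icc 0 h).norm_image_sub_le_of_norm_hasDerivWithin_le
      (fun t _ => (hdg1 t).hasDerivWithinAt)
      (fun t ht => by simpa [Real.norm_eq_abs] using hB2 t ht)
      hξIcc h0Icc
  have hB2nonneg : 0 ≤ B2 := le_trans (abs_nonneg _) (hB2 0 h0Icc)
  have h1 : |g1 ξ| ≤ 2 * B0 / h := by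
    rw [hslope]
    have hgh : |g h| ≤ B0 := hB0 h ⟨hh.le, le_refl _⟩
    have hg0 : |g 0| ≤ B0 := hB0 0 h0Icc
    rw [sub_zero, abs_div, abs_of_pos hh]
    have hnum : |g h - g 0| ≤ 2 * B0 := by
      calc |g h - g 0| ≤ |g h| + |g 0| := abs_sub _ _
        _ ≤ 2 * B0 := by linarith
    gcongr
  have h2 : ‖(0:ℝ) - ξ‖ ≤ h := by
    rw [Real.norm_eq_abs, abs_sub_comm, sub_zero, abs_of_nonneg hξ.1.le]; exact hξ.2.le
  have hx0 : g1 0 = pderivDir i v x := by simp [hg1]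
  rw [← hx0]
  calc |g1 0| ≤ |g1 ξ| + ‖g1 0 - g1 ξ‖ := by
        rw [Real.norm_eq_abs]
        have := abs_sub_abs_le_abs_sub (g1 0) (g1 ξ)
        linarith [abs_nonneg (g1 0 - g1 ξ)]
    _ ≤ 2 * B0 / h + B2 * ‖(0:ℝ) - ξ‖ := add_le_add h1 hmvt
    _ ≤ 2 * B0 / h + h * B2 := by
        have := mul_le_mul_of_nonneg_left h2 hB2nonneg
        linarith [this]

/-- Austrian lemma / 0-order estimate, sequence version on `ℝ^d`:
for an overgenerated ring `A_𝓑` and its canonical ideal `I_𝓑` built from a family `𝓑`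
of strictly positive sequences closed under addition, multiplication and inverse,
containing the positive constants and some sequence tending to `0`, a moderate sequence
`(u_n)` of `C^∞` functions all of whose `0`-order seminorms `(sup_K |u_n|)_n` lie in
`I_𝓑` has all its seminorms `(sup_K |∂^α u_n|)_n` in `I_𝓑`. -/
theorem austrian_lemma_zero_order_estimate
    (d : ℕ)
    (𝓑 : Set (ℕ → ℝ))
    (hpos : ∀ b ∈ 𝓑, ∀ n, 0 < b n)
    (hadd : ∀ b ∈ 𝓑, ∀ b' ∈ 𝓑, (fun n => b n + b' n) ∈ 𝓑)
    (hmul : ∀ b ∈ 𝓑, ∀ b' ∈ 𝓑, (fun n => b n * b' n) ∈ 𝓑)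
    (hinv : ∀ b ∈ 𝓑, (fun n => (b n)⁻¹) ∈ 𝓑)
    (hconst : ∀ c : ℝ, 0 < c → (fun _ : ℕ => c) ∈ 𝓑)
    (hzero : ∃ a ∈ 𝓑, Filter.Tendsto a Filter.atTop (nhds 0))
    (u : ℕ → (Fin d → ℝ) → ℝ)
    (hsmooth : ∀ n, ContDiff ℝ (⊤ : ℕ∞) (u n))
    (hmod : ∀ K : Set (Fin d → ℝ), IsCompact K → ∀ α : List (Fin d),
      ∃ b ∈ 𝓑, ∃ N : ℕ, ∀ n ≥ N, (⨆ x : K, |pderivMulti α (u n) x|) ≤ b n)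
    (hneg0 : ∀ K : Set (Fin d → ℝ), IsCompact K →
      ∀ b ∈ 𝓑, ∃ N : ℕ, ∀ n ≥ N, (⨆ x : K, |u n x|) ≤ b n) :
    ∀ K : Set (Fin d → ℝ), IsCompact K → ∀ α : List (Fin d),
      ∀ b ∈ 𝓑, ∃ N : ℕ, ∀ n ≥ N, (⨆ x : K, |pderivMulti α (u n) x|) ≤ b n := by
  have main : ∀ α : List (Fin d), ∀ K : Set (Fin d → ℝ), IsCompact K →
      ∀ b ∈ 𝓑, ∃ N : ℕ, ∀ n ≥ N, (⨆ x : K, |pderivMulti α (u n) x|) ≤ b n := by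
    intro α
    induction α with
    | nil => exact fun K hK b hb => hneg0 K hK b hb
    | cons i α ih =>
      intro K hK b hb
      set e : Fin d → ℝ := Pi.single i 1 with he
      have hnorme : ‖e‖ = 1 := by rw [he, Pi.norm_single]; simp
      set v : ℕ → (Fin d → ℝ) → ℝ := fun n => pderivMulti α (u n) with hv
      have hvs : ∀ n, ContDiff ℝ (⊤ : ℕ∞) (v n) := fun n => pderivMulti_smooth α (hsmooth n)
      set K' : Set (Fin d → ℝ) := Metric.cthickening 1 K with hK'def
      have hK' : IsCompact K' := hK.cthickening
      have hseg : ∀ x ∈ K, ∀ t ∈ Set.Icc (0:ℝ) 1, x + t • e ∈ K' := by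
        intro x hx t ht
        apply Metric.closedBall_subset_cthickening hx 1
        rw [Metric.mem_closedBall, dist_eq_norm]
        have : x + t • e - x = t • e := by abel
        rw [this, norm_smul, hnorme, Real.norm_eq_abs, abs_of_nonneg ht.1]
        simpa using ht.2
      obtain ⟨m, hm𝓑, N1, hN1⟩ := hmod K' hK' (i :: i :: α)
      have bpos : ∀ n, 0 < b n := hpos b hb
      have mpos : ∀ n, 0 < m n := hpos m hm𝓑
      set X : ℕ → ℝ := fun n => (2 * (b n + 1)) * (m n + 1) with hXdef
      have hXpos : ∀ n, 0 < X n := by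
        intro n; have := bpos n; have := mpos n; positivity
      have hX𝓑 : X ∈ 𝓑 := by
        exact hmul _ (hmul _ (hconst 2 two_pos) _ (hadd b hb _ (hconst 1 one_pos))) _
          (hadd m hm𝓑 _ (hconst 1 one_pos))
      set hs : ℕ → ℝ := fun n => b n * (X n)⁻¹ with hhsdef
      have hhs𝓑 : hs ∈ 𝓑 := hmul b hb _ (hinv _ hX𝓑)
      set c : ℕ → ℝ := fun n => (b n * hs n) * (4:ℝ)⁻¹ with hcdef
      have hc𝓑 : c ∈ 𝓑 := hmul _ (hmul b hb _ hhs𝓑) _ (hconst (4:ℝ)⁻¹ (by norm_num))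
      obtain ⟨N2, hN2⟩ := ih K' hK' c hc𝓑
      refine ⟨max N1 N2, fun n hn => ?_⟩
      have hn1 : n ≥ N1 := le_trans (le_max_left _ _) hn
      have hn2 : n ≥ N2 := le_trans (le_max_right _ _) hn
      have hhpos : 0 < hs n := by
        have := bpos n; have := hXpos n; rw [hhsdef]; positivity
      have hhle1 : hs n ≤ 1 := by
        show b n * (X n)⁻¹ ≤ 1
        rw [← div_eq_mul_inv, div_le_one (hXpos n)]
        have := bpos n; have := mpos n
        simp only [hXdef]; nlinarith
      -- pointwise bounds from the sups
      have hbdd0 : BddAbove (Set.range fun x : K' => |v n x|) := by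
        have h := (hK'.image ((hvs n).continuous.abs)).bddAbove
        rwa [Set.image_eq_range] at h
      have hbdd2 : BddAbove (Set.range fun x : K' => |pderivDir i (pderivDir i (v n)) x|) := by
        have h := (hK'.image (((pderivDir_smooth i (pderivDir_smooth i (hvs n))).continuous).abs)).bddAbove
        rwa [Set.image_eq_range] at h
      have hpt0 : ∀ y ∈ K', |v n y| ≤ c n := by
        intro y hy
        exact le_trans (le_ciSup hbdd0 ⟨y, hy⟩) (hN2 n hn2)
      have hpt2 : ∀ y ∈ K', |pderivDir i (pderivDir i (v n)) y| ≤ m n := by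
        intro y hy
        exact le_trans (le_ciSup hbdd2 ⟨y, hy⟩) (hN1 n hn1)
      apply Real.iSup_le _ (bpos n).le
      rintro ⟨x, hx⟩
      have hmem : ∀ t ∈ Set.Icc (0:ℝ) (hs n), x + t • e ∈ K' := by
        intro t ht
        exact hseg x hx t ⟨ht.1, le_trans ht.2 hhle1⟩
      have hkey := key_estimate i (hvs n) x hhpos
        (fun t ht => hpt0 _ (hmem t ht))
        (fun t ht => hpt2 _ (hmem t ht))
      have hne : hs n ≠ 0 := hhpos.ne'
      have e1 : 2 * c n / hs n = b n / 2 := by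
        rw [hcdef]
        field_simp
        ring
      have e2 : hs n * m n ≤ b n / 2 := by
        show b n * (X n)⁻¹ * m n ≤ b n / 2
        rw [← div_eq_mul_inv, div_mul_eq_mul_div, div_le_div_iff₀ (hXpos n) two_pos]
        have hb1 := bpos n; have hm1 := mpos n
        show b n * m n * 2 ≤ b n * (2 * (b n + 1) * (m n + 1))
        nlinarith [mul_pos (mul_pos hb1 hb1) hm1, mul_pos hb1 hb1]
      calc |pderivMulti (i :: α) (u n) x| = |pderivDir i (v n) x| := rfl
        _ ≤ 2 * c n / hs n + hs n * m n := hkey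
        _ ≤ b n / 2 + b n / 2 := by rw [e1]; linarith
        _ = b n := by ring
  exact fun K hK α b hb => main α K hK b hb
end

section
/- (Induction step of the Austrian lemma, one dimension.) Let 𝓑 ⊆ (ℝ₊*)^ℕ be closed under addition, multiplication and inverse, containing positive constants and a sequence tending to 0; define A_𝓑 and I_𝓑 as the polynomially overgenerated ring and its canonical ideal. Let (u_n) be a sequence of C² functions on ℝ such that for every compact K, both (sup_K |u_n|)_n, (sup_K |u_n'|)_n and (sup_K |u_n''|)_n lie in A_𝓑 and (sup_K |u_n|)_n lies in I_𝓑. Then for every compact K, (sup_K |u_n'|)_n lies in I_𝓑. -/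
/-!
Fix a compact `K`, a target `b ∈ 𝓑`, and let `β ∈ 𝓑` eventually dominate `sup |u_n''|` on the
compact neighbourhood `L = K + [0, 1]`. For `x ∈ K` the mean value theorem on `[x, x + h_n]`,
applied to `u_n` and then to `u_n'`, gives `|u_n'(x)| ≤ 2 sup_L |u_n| / h_n + β_n h_n`. The step
`h_n = b_n / (2(β_n + b_n)) ≤ 1` lies in `𝓑`, hence so does `b_n h_n / 4`, which eventually
dominates `sup_L |u_n|`; then both terms are at most `b_n / 2`.
-/

open Set
open scoped Pointwise

lemma le_iSup_of_isCompact {X : Type*} [TopologicalSpace X] {K : Set X} (hK : IsCompact K)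
    {f : X → ℝ} (hf : ContinuousOn f K) {y : X} (hy : y ∈ K) : f y ≤ ⨆ x : K, f x :=
  le_ciSup (by simpa only [image_eq_range] using hK.bddAbove_image hf) (⟨y, hy⟩ : K)

lemma Icc_add_one_subset_add_Icc {K : Set ℝ} {x : ℝ} (hx : x ∈ K) :
    Icc x (x + 1) ⊆ K + Icc 0 1 := fun y hy =>
  ⟨x, hx, y - x, ⟨by linarith [hy.1], by linarith [hy.2]⟩, by ring⟩

lemma abs_deriv_le_of_abs_le_of_abs_deriv_deriv_le {f : ℝ → ℝ} (hf : Differentiable ℝ f)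
    (hf' : Differentiable ℝ (deriv f)) {x h M B : ℝ} (hh : 0 < h)
    (hM : ∀ y ∈ Icc x (x + h), |f y| ≤ M) (hB : ∀ y ∈ Icc x (x + h), |deriv (deriv f) y| ≤ B) :
    |deriv f x| ≤ 2 * M / h + B * h := by
  obtain ⟨ξ, hξ, hslope⟩ := exists_deriv_eq_slope f (by linarith : x < x + h)
    hf.continuous.continuousOn hf.differentiableOn
  have hslope_le : |deriv f ξ| ≤ 2 * M / h := by
    rw [hslope, add_sub_cancel_left, abs_div, abs_of_pos hh]
    gcongr
    calc |f (x + h) - f x| ≤ |f (x + h)| + |f x| := abs_sub _ _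
      _ ≤ M + M := add_le_add (hM _ ⟨by linarith, le_rfl⟩) (hM _ ⟨le_rfl, by linarith⟩)
      _ = 2 * M := by ring
  have hvar : |deriv f ξ - deriv f x| ≤ B * (ξ - x) :=
    norm_image_sub_le_of_norm_deriv_le_segment' (a := x) (b := x + h)
      (fun y _ => (hf' y).hasDerivAt.hasDerivWithinAt)
      (fun y hy => hB y (Ico_subset_Icc_self hy)) ξ ⟨hξ.1.le, hξ.2.le⟩
  have hB0 : 0 ≤ B := (abs_nonneg _).trans (hB x ⟨le_rfl, by linarith⟩)
  calc |deriv f x| ≤ |deriv f ξ| + |deriv f ξ - deriv f x| := by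
        linarith [abs_sub_abs_le_abs_sub (deriv f x) (deriv f ξ),
          abs_sub_comm (deriv f x) (deriv f ξ)]
    _ ≤ 2 * M / h + B * h := by
        gcongr
        exact hvar.trans (mul_le_mul_of_nonneg_left (by linarith [hξ.2]) hB0)

lemma abs_deriv_le_of_abs_le_step {f : ℝ → ℝ} (hf : ContDiff ℝ 2 f) {x b β : ℝ} (hb : 0 < b)
    (hβ : 0 ≤ β)
    (h0 : ∀ y ∈ Icc x (x + 1), |f y| ≤ b * (b * (2 * (β + b))⁻¹) * (1 / 4))
    (h2 : ∀ y ∈ Icc x (x + 1), |deriv (deriv f) y| ≤ β) :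
    |deriv f x| ≤ b := by
  set h := b * (2 * (β + b))⁻¹ with h_def
  have hh : 0 < h := by positivity
  have hprod : h * (2 * (β + b)) = b := by
    rw [h_def]
    field_simp
  have hh1 : h ≤ 1 := by nlinarith
  have hsub : Icc x (x + h) ⊆ Icc x (x + 1) := Icc_subset_Icc_right (by linarith)
  have hβh : β * h ≤ b / 2 := by nlinarith
  calc |deriv f x| ≤ 2 * (b * h * (1 / 4)) / h + β * h :=
        abs_deriv_le_of_abs_le_of_abs_deriv_deriv_le (hf.differentiable (by norm_num))
          hf.differentiable_deriv_two hh (fun y hy => h0 y (hsub hy)) (fun y hy => h2 y (hsub hy))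
    _ ≤ b := by
        rw [show 2 * (b * h * (1 / 4)) / h = b / 2 by field_simp; ring]
        linarith

theorem austrian_lemma_induction_step_dim_one_general
    (𝓑 : Set (ℕ → ℝ))
    (hpos : ∀ b ∈ 𝓑, ∀ n, 0 < b n)
    (hadd : ∀ b ∈ 𝓑, ∀ b' ∈ 𝓑, (fun n => b n + b' n) ∈ 𝓑)
    (hmul : ∀ b ∈ 𝓑, ∀ b' ∈ 𝓑, (fun n => b n * b' n) ∈ 𝓑)
    (hinv : ∀ b ∈ 𝓑, (fun n => (b n)⁻¹) ∈ 𝓑)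
    (hconst : ∀ c : ℝ, 0 < c → (fun _ : ℕ => c) ∈ 𝓑)
    (u : ℕ → ℝ → ℝ)
    (hC2 : ∀ n, ContDiff ℝ 2 (u n))
    (hmod2 : ∀ K : Set ℝ, IsCompact K →
      ∃ b ∈ 𝓑, ∃ N : ℕ, ∀ n ≥ N, (⨆ x : K, |deriv (deriv (u n)) x|) ≤ b n)
    (hneg0 : ∀ K : Set ℝ, IsCompact K →
      ∀ b ∈ 𝓑, ∃ N : ℕ, ∀ n ≥ N, (⨆ x : K, |u n x|) ≤ b n) :
    ∀ K : Set ℝ, IsCompact K →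
      ∀ b ∈ 𝓑, ∃ N : ℕ, ∀ n ≥ N, (⨆ x : K, |deriv (u n) x|) ≤ b n := by
  intro K hK b hb
  have hL : IsCompact (K + Icc (0 : ℝ) 1) := hK.add isCompact_Icc
  obtain ⟨β, hβ, N₂, hN₂⟩ := hmod2 _ hL
  have hstep : (fun n => b n * (2 * (β n + b n))⁻¹) ∈ 𝓑 :=
    hmul _ hb _ (hinv _ (hmul _ (hconst 2 two_pos) _ (hadd _ hβ _ hb)))
  obtain ⟨N₀, hN₀⟩ := hneg0 _ hL _ (hmul _ (hmul _ hb _ hstep) _ (hconst (1 / 4) (by norm_num)))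
  refine ⟨max N₂ N₀, fun n hn => Real.iSup_le (fun ⟨x, hx⟩ => ?_) (hpos b hb n).le⟩
  have hcont2 : Continuous (deriv (deriv (u n))) :=
    ((hC2 n).deriv' (n := 1)).continuous_deriv le_rfl
  refine abs_deriv_le_of_abs_le_step (hC2 n) (hpos b hb n) (hpos β hβ n).le
    (fun y hy => ?_) (fun y hy => ?_)
  · exact (le_iSup_of_isCompact hL (hC2 n).continuous.abs.continuousOn
      (Icc_add_one_subset_add_Icc hx hy)).trans (hN₀ n (le_of_max_le_right hn))
  · exact (le_iSup_of_isCompact hL hcont2.abs.continuousOn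
      (Icc_add_one_subset_add_Icc hx hy)).trans (hN₂ n (le_of_max_le_left hn))

/-- Induction step of the Austrian lemma, one dimension: with `A_𝓑`, `I_𝓑`
as in the definition of polynomially overgenerated rings over `ℕ`, if `(u_n)` is a
sequence of `C²` functions on `ℝ` with `(sup_K |u_n|)_n`, `(sup_K |u_n'|)_n` and
`(sup_K |u_n''|)_n` in `A_𝓑` for every compact `K`, and `(sup_K |u_n|)_n ∈ I_𝓑` for every
compact `K`, then `(sup_K |u_n'|)_n ∈ I_𝓑` for every compact `K`. -/
theorem austrian_lemma_induction_step_dim_one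
    (𝓑 : Set (ℕ → ℝ))
    (hpos : ∀ b ∈ 𝓑, ∀ n, 0 < b n)
    (hadd : ∀ b ∈ 𝓑, ∀ b' ∈ 𝓑, (fun n => b n + b' n) ∈ 𝓑)
    (hmul : ∀ b ∈ 𝓑, ∀ b' ∈ 𝓑, (fun n => b n * b' n) ∈ 𝓑)
    (hinv : ∀ b ∈ 𝓑, (fun n => (b n)⁻¹) ∈ 𝓑)
    (hconst : ∀ c : ℝ, 0 < c → (fun _ : ℕ => c) ∈ 𝓑)
    (hzero : ∃ a ∈ 𝓑, Filter.Tendsto a Filter.atTop (nhds 0))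
    (u : ℕ → ℝ → ℝ)
    (hC2 : ∀ n, ContDiff ℝ 2 (u n))
    (hmod0 : ∀ K : Set ℝ, IsCompact K →
      ∃ b ∈ 𝓑, ∃ N : ℕ, ∀ n ≥ N, (⨆ x : K, |u n x|) ≤ b n)
    (hmod1 : ∀ K : Set ℝ, IsCompact K →
      ∃ b ∈ 𝓑, ∃ N : ℕ, ∀ n ≥ N, (⨆ x : K, |deriv (u n) x|) ≤ b n)
    (hmod2 : ∀ K : Set ℝ, IsCompact K →
      ∃ b ∈ 𝓑, ∃ N : ℕ, ∀ n ≥ N, (⨆ x : K, |deriv (deriv (u n)) x|) ≤ b n)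
    (hneg0 : ∀ K : Set ℝ, IsCompact K →
      ∀ b ∈ 𝓑, ∃ N : ℕ, ∀ n ≥ N, (⨆ x : K, |u n x|) ≤ b n) :
    ∀ K : Set ℝ, IsCompact K →
      ∀ b ∈ 𝓑, ∃ N : ℕ, ∀ n ≥ N, (⨆ x : K, |deriv (u n) x|) ≤ b n :=
  austrian_lemma_induction_step_dim_one_general 𝓑 hpos hadd hmul hinv hconst u hC2 hmod2 hneg0
end
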